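/- In a line pool, suppose G(λ) < ∞. Then the probability that the system is empty satisfies ψ = ( M(K) − Λ(I) ) / ( ∑_{k=1}^{K} μ_k / ( ψ_{|1..k−1} · ψ_{|k+1..K} ) ). -/

import Mathlib

open scoped BigOperators

/-- The balance function of balanced fairness: `Φ(0) = 1` and
`Φ(x) = (∑_{i : x_i > 0} Φ(x - e_i)) / M(⋃_{i : x_i > 0} 𝒦_i)`. -/
noncomputable def Phi {I K : Type} [Fintype I] [DecidableEq I] [DecidableEq K]
    (μ : K → ℝ) (Ka : I → Finset K) (x : I → ℕ) : ℝ :=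
  if x = fun _ => 0 then 1
  else (∑ i ∈ (Finset.univ.filter (fun i => 0 < x i)).attach,
      Phi μ Ka (Function.update x i.1 (x i.1 - 1))) /
    (∑ k ∈ (Finset.univ.filter (fun i => 0 < x i)).biUnion Ka, μ k)
termination_by ∑ i, x i
decreasing_by
  have hi := i.2
  simp only [Finset.mem_filter] at hi
  apply Finset.sum_lt_sum
  · intro j _
    rcases eq_or_ne j i.1 with rfl | h
    · simp [Function.update_self]
    · rw [Function.update_of_ne h]
  · exact ⟨i.1, Finset.mem_univ i.1, by simp [Function.update_self]; omega⟩

/-- The normalization series `G(λ) = ∑_{x∈ℕ^I} Φ(x) λ^x` (as a real tsum). -/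
noncomputable def Gf {I K : Type} [Fintype I] [DecidableEq I] [DecidableEq K]
    (μ : K → ℝ) (Ka : I → Finset K) (lam : I → ℝ) : ℝ :=
  ∑' x : I → ℕ, Phi μ Ka x * ∏ i, lam i ^ x i

/-- Classes of a line pool with `K` servers `0, …, K−1`: intervals `(i, j)`, `i ≤ j`. -/
abbrev LineCls (K : ℕ) : Type := {p : Fin K × Fin K // p.1 ≤ p.2}

/-- The servers `{i, …, j}` assigned to the class `(i, j)` of a line pool. -/
def lineKa {K : ℕ} (c : LineCls K) : Finset (Fin K) := Finset.Icc c.1.1 c.1.2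

/-- Arrival rates of the line system restricted to the servers `a, …, b`: only the
classes `(i,j)` with `a ≤ i` and `j ≤ b` are kept (integer bounds, so that empty ranges
are allowed). -/
noncomputable def lineLamRange {K : ℕ} (lam : LineCls K → ℝ) (a b : ℤ)
    (c : LineCls K) : ℝ :=
  if a ≤ ((c.1.1 : ℕ) : ℤ) ∧ ((c.1.2 : ℕ) : ℤ) ≤ b then lam c else 0

/-- Empty probability `ψ_{|a..b}` of the line system restricted to the servers `a, …, b`
(equal to `1` when `a > b`, since then no class remains). -/
noncomputable def linePsiRange {K : ℕ} (μ : Fin K → ℝ) (lam : LineCls K → ℝ)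
    (a b : ℤ) : ℝ :=
  (Gf μ lineKa (lineLamRange lam a b))⁻¹

/-!
In balanced fairness, `Φ(x) · μ(𝒦(x)) = ∑_{c : x_c > 0} Φ(x - e_c)` for `x ≠ 0`, where `𝒦(x)` is
the set of busy servers. Multiplying by `λ^x` and summing over `x` shifts each sum back onto `G`,
so `∑_x Φ(x) λ^x μ(𝒦(x)) = Λ(I) G`. Writing `μ(𝒦(x)) = M(K) - ∑_{k ∉ 𝒦(x)} μ_k` turns this into
`M(K) G = Λ(I) G + ∑_k μ_k G_k`, where `G_k` sums only over the states in which server `k` is idle,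
i.e. it is the normalizer with the classes containing `k` removed. In a line pool the remaining
classes lie either left or right of `k` and use disjoint servers, so `Φ` factorizes over them and
`G_k = G_{|1..k-1} · G_{|k+1..K}`. Solving for `1 / G` gives the formula.

The series are summed in `ℝ≥0∞`, where the rearrangements need no summability; the finiteness of
`G` is used only to return to `ℝ`.
-/

open Finset

section BalanceFunction

theorem update_pred_eq_sub_single {I : Type} [DecidableEq I] (x : I → ℕ) (i : I) :
    Function.update x i (x i - 1) = x - Pi.single i 1 := by
  ext j
  rcases eq_or_ne j i with rfl | hj
  · simp
  · simp [hj]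

theorem single_le_of_pos {I : Type} [DecidableEq I] {x : I → ℕ} {i : I} (h : 0 < x i) :
    Pi.single i 1 ≤ x := by
  intro j
  rcases eq_or_ne j i with rfl | hj
  · rw [Pi.single_eq_same]
    exact h
  · simp [hj]

variable {I K : Type} [Fintype I] [DecidableEq K]

def activeClasses (x : I → ℕ) : Finset I := univ.filter fun i => 0 < x i

def activeServers (Ka : I → Finset K) (x : I → ℕ) : Finset K := (activeClasses x).biUnion Ka

@[simp]
theorem mem_activeClasses {x : I → ℕ} {i : I} : i ∈ activeClasses x ↔ 0 < x i := by
  simp [activeClasses]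

theorem mem_activeServers {Ka : I → Finset K} {x : I → ℕ} {k : K} :
    k ∈ activeServers Ka x ↔ ∃ i, 0 < x i ∧ k ∈ Ka i := by
  simp [activeServers]

theorem activeServers_mono (Ka : I → Finset K) {x y : I → ℕ} (h : x ≤ y) :
    activeServers Ka x ⊆ activeServers Ka y := by
  intro k
  simp only [mem_activeServers]
  exact fun ⟨i, hi, hk⟩ => ⟨i, hi.trans_le (h i), hk⟩

theorem disjoint_activeClasses_of_disjoint_activeServers {Ka : I → Finset K}
    (hKa : ∀ i, (Ka i).Nonempty) {x y : I → ℕ}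
    (h : Disjoint (activeServers Ka x) (activeServers Ka y)) :
    Disjoint (activeClasses x) (activeClasses y) := by
  refine disjoint_left.mpr fun i hx hy => ?_
  obtain ⟨k, hk⟩ := hKa i
  exact disjoint_left.mp h (mem_biUnion.mpr ⟨i, hx, hk⟩) (mem_biUnion.mpr ⟨i, hy, hk⟩)

theorem sum_activeServers_pos (μ : K → ℝ) (Ka : I → Finset K) (hμ : ∀ k, 0 < μ k)
    (hKa : ∀ i, (Ka i).Nonempty) {x : I → ℕ} (hx : x ≠ 0) : 0 < ∑ k ∈ activeServers Ka x, μ k := by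
  obtain ⟨i, hi⟩ : ∃ i, 0 < x i := by
    by_contra! h
    exact hx (funext fun i => Nat.le_zero.mp (h i))
  obtain ⟨k, hk⟩ := hKa i
  exact sum_pos (fun k _ => hμ k) ⟨k, mem_activeServers.mpr ⟨i, hi, hk⟩⟩

variable [DecidableEq I]

theorem activeClasses_add (x y : I → ℕ) :
    activeClasses (x + y) = activeClasses x ∪ activeClasses y := by
  ext i
  simp only [mem_activeClasses, mem_union, Pi.add_apply]
  omega

theorem activeServers_add (Ka : I → Finset K) (x y : I → ℕ) :
    activeServers Ka (x + y) = activeServers Ka x ∪ activeServers Ka y := by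
  rw [activeServers, activeClasses_add, union_biUnion]; rfl

theorem sum_sub_single_lt {x : I → ℕ} {i : I} (h : 0 < x i) :
    ∑ j, (x - Pi.single i 1 : I → ℕ) j < ∑ j, x j := by
  have hsum : ∑ j, (x - Pi.single i 1 : I → ℕ) j + ∑ j, Pi.single i (1 : ℕ) j = ∑ j, x j := by
    rw [← sum_add_distrib]
    exact sum_congr rfl fun j _ => tsub_add_cancel_of_le (single_le_of_pos h j)
  simp only [sum_pi_single', mem_univ, if_true] at hsum
  omega

variable (μ : K → ℝ) (Ka : I → Finset K)

theorem Phi_zero : Phi μ Ka 0 = 1 := by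
  rw [Phi]
  exact if_pos rfl

theorem Phi_of_ne_zero {x : I → ℕ} (hx : x ≠ 0) :
    Phi μ Ka x = (∑ i ∈ activeClasses x, Phi μ Ka (x - Pi.single i 1)) /
      ∑ k ∈ activeServers Ka x, μ k := by
  rw [Phi, if_neg (show x ≠ fun _ => 0 from hx),
    sum_attach _ fun i => Phi μ Ka (Function.update x i (x i - 1))]
  simp only [update_pred_eq_sub_single]
  rfl

theorem Phi_nonneg (hμ : ∀ k, 0 ≤ μ k) (x : I → ℕ) : 0 ≤ Phi μ Ka x := by
  induction h : ∑ i, x i using Nat.strong_induction_on generalizing x with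
  | _ n ih =>
    rcases eq_or_ne x 0 with rfl | hx
    · simp [Phi_zero]
    rw [Phi_of_ne_zero μ Ka hx]
    refine div_nonneg (sum_nonneg fun i hi => ?_) (sum_nonneg fun k _ => hμ k)
    exact ih _ (h ▸ sum_sub_single_lt (mem_activeClasses.mp hi)) _ rfl

theorem Phi_mul_sum_activeServers (hμ : ∀ k, 0 < μ k) (hKa : ∀ i, (Ka i).Nonempty)
    {x : I → ℕ} (hx : x ≠ 0) :
    Phi μ Ka x * ∑ k ∈ activeServers Ka x, μ k =
      ∑ i ∈ activeClasses x, Phi μ Ka (x - Pi.single i 1) := by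
  rw [Phi_of_ne_zero μ Ka hx, div_mul_cancel₀ _ (sum_activeServers_pos μ Ka hμ hKa hx).ne']

theorem Phi_add_of_disjoint (hμ : ∀ k, 0 < μ k) (hKa : ∀ i, (Ka i).Nonempty) (y z : I → ℕ)
    (hyz : Disjoint (activeServers Ka y) (activeServers Ka z)) :
    Phi μ Ka (y + z) = Phi μ Ka y * Phi μ Ka z := by
  rcases eq_or_ne y 0 with rfl | hy
  · simp [Phi_zero]
  rcases eq_or_ne z 0 with rfl | hz
  · simp [Phi_zero]
  have hleft : ∀ i ∈ activeClasses y,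
      Phi μ Ka (y + z - Pi.single i 1) = Phi μ Ka (y - Pi.single i 1) * Phi μ Ka z := by
    intro i hi
    rw [← tsub_add_eq_add_tsub (single_le_of_pos (mem_activeClasses.mp hi))]
    exact Phi_add_of_disjoint hμ hKa _ _ (hyz.mono_left (activeServers_mono Ka tsub_le_self))
  have hright : ∀ i ∈ activeClasses z,
      Phi μ Ka (y + z - Pi.single i 1) = Phi μ Ka y * Phi μ Ka (z - Pi.single i 1) := by
    intro i hi
    rw [add_tsub_assoc_of_le (single_le_of_pos (mem_activeClasses.mp hi))]
    exact Phi_add_of_disjoint hμ hKa _ _ (hyz.mono_right (activeServers_mono Ka tsub_le_self))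
  have hyz0 : y + z ≠ 0 := fun h => hy (nonpos_iff_eq_zero.mp (h ▸ le_self_add))
  -- The recursion at `y + z` is the sum of those at `y` and at `z`: `𝒦(y + z) = 𝒦(y) ⊔ 𝒦(z)`.
  refine mul_right_cancel₀ (sum_activeServers_pos μ Ka hμ hKa hyz0).ne' ?_
  rw [Phi_mul_sum_activeServers μ Ka hμ hKa hyz0, activeClasses_add,
    sum_union (disjoint_activeClasses_of_disjoint_activeServers hKa hyz), sum_congr rfl hleft,
    sum_congr rfl hright, ← sum_mul, ← mul_sum, ← Phi_mul_sum_activeServers μ Ka hμ hKa hy,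
    ← Phi_mul_sum_activeServers μ Ka hμ hKa hz, activeServers_add, sum_union hyz]
  ring
termination_by ∑ i, (y i + z i)
decreasing_by
  all_goals
    simp only [Pi.sub_apply, sum_add_distrib]
  · exact Nat.add_lt_add_right (sum_sub_single_lt (mem_activeClasses.mp hi)) _
  · exact Nat.add_lt_add_left (sum_sub_single_lt (mem_activeClasses.mp hi)) _

end BalanceFunction

open Classical in
theorem prod_indicator_pow {I M : Type*} [Fintype I] [CommMonoidWithZero M] (s : Set I)
    (w : I → M) (x : I → ℕ) :
    ∏ c, s.indicator w c ^ x c = if ∀ c, 0 < x c → c ∈ s then ∏ c, w c ^ x c else 0 := by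
  split_ifs with h
  · refine prod_congr rfl fun c _ => ?_
    rcases (x c).eq_zero_or_pos with hc | hc
    · simp [hc]
    · rw [Set.indicator_of_mem (h c hc)]
  · obtain ⟨c, hc, hcs⟩ := not_forall₂.mp h
    exact prod_eq_zero (mem_univ c) (by rw [Set.indicator_of_notMem hcs, zero_pow hc.ne'])

section Normalizer

open scoped ENNReal

variable {I K : Type} [Fintype I] [DecidableEq I] [DecidableEq K] (μ : K → ℝ) (Ka : I → Finset K)

noncomputable def phiWeight (w : I → ℝ≥0∞) (x : I → ℕ) : ℝ≥0∞ :=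
  ENNReal.ofReal (Phi μ Ka x) * ∏ c, w c ^ x c

noncomputable def normalizer (w : I → ℝ≥0∞) : ℝ≥0∞ :=
  ∑' x, phiWeight μ Ka w x

open Classical in
theorem phiWeight_indicator (s : Set I) (w : I → ℝ≥0∞) (x : I → ℕ) :
    phiWeight μ Ka (s.indicator w) x =
      if ∀ c, 0 < x c → c ∈ s then phiWeight μ Ka w x else 0 := by
  rw [phiWeight, prod_indicator_pow]
  split_ifs <;> simp [phiWeight]

theorem phiWeight_indicator_notMem (k : K) (w : I → ℝ≥0∞) (x : I → ℕ) :
    phiWeight μ Ka ({c | k ∉ Ka c}.indicator w) x =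
      if k ∈ activeServers Ka x then 0 else phiWeight μ Ka w x := by
  rw [phiWeight_indicator]
  by_cases hk : k ∈ activeServers Ka x
  · obtain ⟨c, hc, hkc⟩ := mem_activeServers.mp hk
    rw [if_pos hk, if_neg fun h => h c hc hkc]
  · refine (if_pos ?_).trans (if_neg hk).symm
    exact fun c hc hkc => hk (mem_activeServers.mpr ⟨c, hc, hkc⟩)

theorem tsum_Phi_sub_single_mul_prod (w : I → ℝ≥0∞) (c : I) :
    ∑' x : I → ℕ, (if 0 < x c then
        ENNReal.ofReal (Phi μ Ka (x - Pi.single c 1)) * ∏ j, w j ^ x j else 0) =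
      w c * normalizer μ Ka w := by
  rw [normalizer, ← ENNReal.tsum_mul_left,
    ← (add_left_injective (Pi.single c 1 : I → ℕ)).tsum_eq]
  · refine tsum_congr fun y => ?_
    have hsingle : ∏ j, w j ^ (Pi.single c 1 : I → ℕ) j = w c := by
      simp [Pi.single_apply, pow_ite]
    simp only [Pi.add_apply, Pi.single_eq_same, Nat.add_one_pos, if_true, add_tsub_cancel_right,
      phiWeight, pow_add, prod_mul_distrib, hsingle]
    ring
  · intro x hx
    have hc : 0 < x c := by
      by_contra h
      exact hx (if_neg h)
    exact ⟨x - Pi.single c 1, tsub_add_cancel_of_le (single_le_of_pos hc)⟩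

theorem phiWeight_mul_sum_activeServers (hμ : ∀ k, 0 < μ k) (hKa : ∀ i, (Ka i).Nonempty)
    (w : I → ℝ≥0∞) (x : I → ℕ) :
    phiWeight μ Ka w x * ∑ k ∈ activeServers Ka x, ENNReal.ofReal (μ k) =
      ∑ c, if 0 < x c then
        ENNReal.ofReal (Phi μ Ka (x - Pi.single c 1)) * ∏ j, w j ^ x j else 0 := by
  rcases eq_or_ne x 0 with rfl | hx
  · simp [activeServers, activeClasses]
  have hPhi := fun y => Phi_nonneg μ Ka (fun k => (hμ k).le) y
  rw [← sum_filter, ← sum_mul, ← ENNReal.ofReal_sum_of_nonneg fun _ _ => hPhi _,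
    ← ENNReal.ofReal_sum_of_nonneg fun k _ => (hμ k).le]
  change _ = ENNReal.ofReal (∑ c ∈ activeClasses x, _) * _
  rw [← Phi_mul_sum_activeServers μ Ka hμ hKa hx, ENNReal.ofReal_mul (hPhi x), phiWeight]
  ring

theorem tsum_phiWeight_mul_sum_activeServers (hμ : ∀ k, 0 < μ k) (hKa : ∀ i, (Ka i).Nonempty)
    (w : I → ℝ≥0∞) :
    ∑' x, phiWeight μ Ka w x * ∑ k ∈ activeServers Ka x, ENNReal.ofReal (μ k) =
      (∑ c, w c) * normalizer μ Ka w := by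
  simp_rw [phiWeight_mul_sum_activeServers μ Ka hμ hKa,
    Summable.tsum_finsetSum fun _ _ => ENNReal.summable, tsum_Phi_sub_single_mul_prod, sum_mul]

theorem sum_mul_normalizer [Fintype K] (hμ : ∀ k, 0 < μ k) (hKa : ∀ i, (Ka i).Nonempty)
    (w : I → ℝ≥0∞) :
    (∑ k, ENNReal.ofReal (μ k)) * normalizer μ Ka w =
      (∑ c, w c) * normalizer μ Ka w +
        ∑ k, ENNReal.ofReal (μ k) * normalizer μ Ka ({c | k ∉ Ka c}.indicator w) := by
  have hsplit : ∀ x, phiWeight μ Ka w x * ∑ k, ENNReal.ofReal (μ k) =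
      phiWeight μ Ka w x * ∑ k ∈ activeServers Ka x, ENNReal.ofReal (μ k) +
        ∑ k, ENNReal.ofReal (μ k) * phiWeight μ Ka ({c | k ∉ Ka c}.indicator w) x := by
    intro x
    simp_rw [phiWeight_indicator_notMem, mul_ite, mul_zero]
    rw [← sum_add_sum_compl (activeServers Ka x), mul_add]
    congr 1
    rw [sum_ite, sum_const_zero, zero_add, filter_not, filter_mem_eq_inter, univ_inter,
      ← compl_eq_univ_sdiff, mul_sum]
    exact sum_congr rfl fun k _ => mul_comm (phiWeight μ Ka w x) _
  rw [normalizer, mul_comm, ← ENNReal.tsum_mul_right]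
  simp_rw [hsplit, ENNReal.tsum_add, tsum_phiWeight_mul_sum_activeServers μ Ka hμ hKa,
    Summable.tsum_finsetSum fun _ _ => ENNReal.summable, ENNReal.tsum_mul_left, normalizer]

theorem phiWeight_eq_mul_indicator (hμ : ∀ k, 0 < μ k) (hKa : ∀ i, (Ka i).Nonempty)
    (w : I → ℝ≥0∞) (s : Set I)
    (hs : ∀ c ∈ s, ∀ c' ∉ s, w c ≠ 0 → w c' ≠ 0 → Disjoint (Ka c) (Ka c')) (x : I → ℕ) :
    phiWeight μ Ka w x = phiWeight μ Ka w (s.indicator x) * phiWeight μ Ka w (sᶜ.indicator x) := by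
  set y := s.indicator x
  set z := sᶜ.indicator x
  have hxyz : x = y + z := (s.indicator_self_add_compl x).symm
  have hmul : phiWeight μ Ka w y * phiWeight μ Ka w z =
      ENNReal.ofReal (Phi μ Ka y) * ENNReal.ofReal (Phi μ Ka z) * ∏ c, w c ^ x c := by
    rw [phiWeight, phiWeight, hxyz]
    simp only [Pi.add_apply, pow_add, prod_mul_distrib]
    ring
  rw [hmul, phiWeight]
  by_cases h0 : ∏ c, w c ^ x c = 0
  · simp [h0]
  have hw : ∀ c, 0 < x c → w c ≠ 0 := fun c hc hwc =>
    h0 (prod_eq_zero (mem_univ c) (by rw [hwc, zero_pow hc.ne']))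
  have hyz : Disjoint (activeServers Ka y) (activeServers Ka z) := by
    refine disjoint_left.mpr fun k hky hkz => ?_
    obtain ⟨c, hc, hkc⟩ := mem_activeServers.mp hky
    obtain ⟨c', hc', hkc'⟩ := mem_activeServers.mp hkz
    refine disjoint_left.mp (hs c (Set.mem_of_indicator_ne_zero hc.ne') c'
      (Set.mem_of_indicator_ne_zero hc'.ne') (hw c ?_) (hw c' ?_)) hkc hkc'
    · exact hc.trans_le (Set.indicator_le_self s x c)
    · exact hc'.trans_le (Set.indicator_le_self sᶜ x c')
  have hPhi := fun v => Phi_nonneg μ Ka (fun k => (hμ k).le) v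
  rw [← ENNReal.ofReal_mul (hPhi y), ← Phi_add_of_disjoint μ Ka hμ hKa y z hyz, ← hxyz]

theorem normalizer_eq_mul_of_disjoint (hμ : ∀ k, 0 < μ k) (hKa : ∀ i, (Ka i).Nonempty)
    (w : I → ℝ≥0∞) (s : Set I)
    (hs : ∀ c ∈ s, ∀ c' ∉ s, w c ≠ 0 → w c' ≠ 0 → Disjoint (Ka c) (Ka c')) :
    normalizer μ Ka w = normalizer μ Ka (s.indicator w) * normalizer μ Ka (sᶜ.indicator w) := by
  have hinj : Function.Injective fun x : I → ℕ => (s.indicator x, sᶜ.indicator x) :=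
    fun x x' h => by
      rw [← s.indicator_self_add_compl x, ← s.indicator_self_add_compl x']
      rw [Prod.mk.injEq] at h
      rw [h.1, h.2]
  rw [normalizer, normalizer, normalizer, ← ENNReal.tsum_mul_right]
  simp_rw [← ENNReal.tsum_mul_left]
  rw [← ENNReal.tsum_prod, ← hinj.tsum_eq]
  · refine tsum_congr fun x => ?_
    rw [phiWeight_indicator, phiWeight_indicator, if_pos, if_pos,
      phiWeight_eq_mul_indicator μ Ka hμ hKa w s hs x]
    · exact fun c hc => Set.mem_of_indicator_ne_zero hc.ne'
    · exact fun c hc => Set.mem_of_indicator_ne_zero hc.ne'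
  · rintro ⟨y, z⟩ hyz
    rw [Function.mem_support, phiWeight_indicator, phiWeight_indicator] at hyz
    split_ifs at hyz with hy hz
    · have hy0 : ∀ c ∉ s, y c = 0 := fun c hc => Nat.eq_zero_of_not_pos fun h => hc (hy c h)
      have hz0 : ∀ c ∈ s, z c = 0 := fun c hc => Nat.eq_zero_of_not_pos fun h => hz c h hc
      refine ⟨y + z, Prod.ext (funext fun c => ?_) (funext fun c => ?_)⟩ <;>
        by_cases hc : c ∈ s <;> simp [hc, hy0, hz0]
    all_goals simp at hyz

theorem normalizer_mono {w w' : I → ℝ≥0∞} (h : w ≤ w') :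
    normalizer μ Ka w ≤ normalizer μ Ka w' :=
  ENNReal.tsum_le_tsum fun x => by
    unfold phiWeight
    gcongr with c
    exact h c

theorem one_le_normalizer (w : I → ℝ≥0∞) : 1 ≤ normalizer μ Ka w := by
  have h0 : phiWeight μ Ka w 0 = 1 := by simp [phiWeight, Phi_zero]
  exact h0 ▸ ENNReal.le_tsum 0

variable {μ} {lam : I → ℝ}

theorem phiWeight_ofReal (hμ : ∀ k, 0 ≤ μ k) (hlam : ∀ c, 0 ≤ lam c) (x : I → ℕ) :
    phiWeight μ Ka (fun c => ENNReal.ofReal (lam c)) x =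
      ENNReal.ofReal (Phi μ Ka x * ∏ c, lam c ^ x c) := by
  rw [phiWeight, ENNReal.ofReal_mul (Phi_nonneg μ Ka hμ x),
    ENNReal.ofReal_prod_of_nonneg fun c _ => pow_nonneg (hlam c) _]
  simp_rw [ENNReal.ofReal_pow (hlam _)]

theorem toReal_normalizer (hμ : ∀ k, 0 ≤ μ k) (hlam : ∀ c, 0 ≤ lam c) :
    (normalizer μ Ka fun c => ENNReal.ofReal (lam c)).toReal = Gf μ Ka lam := by
  simp_rw [normalizer, phiWeight_ofReal Ka hμ hlam]
  rw [ENNReal.tsum_toReal_eq fun _ => ENNReal.ofReal_ne_top, Gf]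
  exact tsum_congr fun x => ENNReal.toReal_ofReal
    (mul_nonneg (Phi_nonneg μ Ka hμ x) (prod_nonneg fun c _ => pow_nonneg (hlam c) _))

theorem normalizer_ne_top (hμ : ∀ k, 0 ≤ μ k) (hlam : ∀ c, 0 ≤ lam c)
    (hG : Summable fun x : I → ℕ => Phi μ Ka x * ∏ c, lam c ^ x c) :
    (normalizer μ Ka fun c => ENNReal.ofReal (lam c)) ≠ ⊤ := by
  simp_rw [normalizer, phiWeight_ofReal Ka hμ hlam]
  rw [← ENNReal.ofReal_tsum_of_nonneg (fun x => mul_nonneg (Phi_nonneg μ Ka hμ x)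
    (prod_nonneg fun c _ => pow_nonneg (hlam c) _)) hG]
  exact ENNReal.ofReal_ne_top

theorem one_le_Gf (hμ : ∀ k, 0 ≤ μ k) (hlam : ∀ c, 0 ≤ lam c)
    (hN : (normalizer μ Ka fun c => ENNReal.ofReal (lam c)) ≠ ⊤) : 1 ≤ Gf μ Ka lam := by
  rw [← toReal_normalizer Ka hμ hlam]
  exact ENNReal.toReal_mono hN (one_le_normalizer μ Ka _)

end Normalizer

section LinePool

open scoped ENNReal

variable {K : ℕ}

theorem lineKa_nonempty (c : LineCls K) : (lineKa c).Nonempty :=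
  nonempty_Icc.mpr c.2

def lineRange (a b : ℤ) : Set (LineCls K) :=
  {c | a ≤ ((c.1.1 : ℕ) : ℤ) ∧ ((c.1.2 : ℕ) : ℤ) ≤ b}

theorem ofReal_lineLamRange (lam : LineCls K → ℝ) (a b : ℤ) :
    (fun c => ENNReal.ofReal (lineLamRange lam a b c)) =
      (lineRange a b).indicator fun c => ENNReal.ofReal (lam c) := by
  ext c
  simp only [lineLamRange, Set.indicator_apply, lineRange, Set.mem_ofPred_eq]
  split_ifs <;> simp

theorem normalizer_indicator_notMem_lineKa (μ : Fin K → ℝ) (hμ : ∀ k, 0 < μ k)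
    (w : LineCls K → ℝ≥0∞) (k : Fin K) :
    normalizer μ lineKa ({c | k ∉ lineKa c}.indicator w) =
      normalizer μ lineKa ((lineRange 0 ((k : ℕ) - 1)).indicator w) *
        normalizer μ lineKa ((lineRange ((k : ℕ) + 1) ((K : ℤ) - 1)).indicator w) := by
  have hleft : {c : LineCls K | c.1.2 < k} ∩ {c | k ∉ lineKa c} = lineRange 0 ((k : ℕ) - 1) := by
    refine Set.ext fun c => ?_
    have := c.2
    simp only [Set.mem_inter_iff, Set.mem_ofPred_eq, lineRange, lineKa, mem_Icc, Fin.lt_def,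
      Fin.le_def] at this ⊢
    omega
  have hright : {c : LineCls K | c.1.2 < k}ᶜ ∩ {c | k ∉ lineKa c} =
      lineRange ((k : ℕ) + 1) ((K : ℤ) - 1) := by
    refine Set.ext fun c => ?_
    have := c.2
    simp only [Set.mem_inter_iff, Set.mem_compl_iff, Set.mem_ofPred_eq, lineRange, lineKa,
      mem_Icc, Fin.lt_def, Fin.le_def] at this ⊢
    omega
  rw [normalizer_eq_mul_of_disjoint μ lineKa hμ lineKa_nonempty _ {c | c.1.2 < k},
    Set.indicator_indicator, Set.indicator_indicator, hleft, hright]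
  · intro c hc c' hc' _ hwc'
    have hk := Set.mem_of_indicator_ne_zero hwc'
    refine disjoint_left.mpr fun j hj hj' => ?_
    simp only [Set.mem_ofPred_eq, lineKa, mem_Icc, Fin.lt_def, Fin.le_def] at hc hc' hk hj hj'
    omega

variable {μ : Fin K → ℝ} {lam : LineCls K → ℝ}

theorem lineLamRange_nonneg (hlam : ∀ c, 0 ≤ lam c) (a b : ℤ) (c : LineCls K) :
    0 ≤ lineLamRange lam a b c := by
  unfold lineLamRange
  split_ifs
  exacts [hlam c, le_rfl]

theorem one_le_Gf_lineLamRange (hμ : ∀ k, 0 ≤ μ k) (hlam : ∀ c, 0 ≤ lam c)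
    (hG : Summable fun x : LineCls K → ℕ => Phi μ lineKa x * ∏ c, lam c ^ x c) (a b : ℤ) :
    1 ≤ Gf μ lineKa (lineLamRange lam a b) := by
  refine one_le_Gf lineKa hμ (lineLamRange_nonneg hlam a b)
    (ne_top_of_le_ne_top (normalizer_ne_top lineKa hμ hlam hG) ?_)
  rw [ofReal_lineLamRange]
  exact normalizer_mono μ lineKa (Set.indicator_le_self _ _)

theorem sub_mul_Gf_lineKa (hμ : ∀ k, 0 < μ k) (hlam : ∀ c, 0 ≤ lam c)
    (hG : Summable fun x : LineCls K → ℕ => Phi μ lineKa x * ∏ c, lam c ^ x c) :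
    ((∑ k, μ k) - ∑ c, lam c) * Gf μ lineKa lam =
      ∑ k : Fin K, μ k * (Gf μ lineKa (lineLamRange lam 0 ((k : ℕ) - 1)) *
        Gf μ lineKa (lineLamRange lam ((k : ℕ) + 1) ((K : ℤ) - 1))) := by
  have hμ0 : ∀ k, 0 ≤ μ k := fun k => (hμ k).le
  have hbal := sum_mul_normalizer μ lineKa hμ lineKa_nonempty fun c => ENNReal.ofReal (lam c)
  simp_rw [normalizer_indicator_notMem_lineKa μ hμ, ← ofReal_lineLamRange] at hbal
  have hlhs : (∑ k, ENNReal.ofReal (μ k)) *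
      (normalizer μ lineKa fun c => ENNReal.ofReal (lam c)) ≠ ⊤ :=
    ENNReal.mul_ne_top (ENNReal.sum_ne_top.mpr fun _ _ => ENNReal.ofReal_ne_top)
      (normalizer_ne_top lineKa hμ0 hlam hG)
  obtain ⟨h₁, h₂⟩ := ENNReal.add_ne_top.mp (hbal ▸ hlhs)
  apply_fun ENNReal.toReal at hbal
  rw [ENNReal.toReal_add h₁ h₂, ENNReal.toReal_sum (ENNReal.sum_ne_top.mp h₂)] at hbal
  have hrange : ∀ a b,
      (normalizer μ lineKa fun c => ENNReal.ofReal (lineLamRange lam a b c)).toReal =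
        Gf μ lineKa (lineLamRange lam a b) :=
    fun a b => toReal_normalizer lineKa hμ0 (lineLamRange_nonneg hlam a b)
  simp only [ENNReal.toReal_mul, ENNReal.toReal_sum fun _ _ => ENNReal.ofReal_ne_top,
    ENNReal.toReal_ofReal (hμ0 _), ENNReal.toReal_ofReal (hlam _),
    toReal_normalizer lineKa hμ0 hlam, hrange] at hbal
  linear_combination hbal

end LinePool

/-- **Proposition 3, empty probability of a line pool.** If `G(λ) < ∞`
then `ψ = (M(K) − Λ(I)) / (∑_{k=1}^K μ_k / (ψ_{|1..k−1} ψ_{|k+1..K}))`. -/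
theorem line_pool_empty_probability
    (K : ℕ) (hK : 1 ≤ K)
    (μ : Fin K → ℝ) (hμ : ∀ k, 0 < μ k)
    (lam : LineCls K → ℝ) (hlam : ∀ c, 0 ≤ lam c)
    (hG : Summable (fun x : LineCls K → ℕ =>
      Phi μ lineKa x * ∏ c, lam c ^ x c)) :
    (Gf μ lineKa lam)⁻¹ =
      ((∑ k, μ k) - ∑ c, lam c) /
        ∑ k : Fin K, μ k /
          (linePsiRange μ lam 0 ((k : ℕ) - 1) *
            linePsiRange μ lam ((k : ℕ) + 1) ((K : ℤ) - 1)) := by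
  have hμ0 : ∀ k, 0 ≤ μ k := fun k => (hμ k).le
  have hone_le := one_le_Gf_lineLamRange hμ0 hlam hG
  have hbal := sub_mul_Gf_lineKa hμ hlam hG
  have hsum_pos : 0 < ∑ k : Fin K, μ k * (Gf μ lineKa (lineLamRange lam 0 ((k : ℕ) - 1)) *
      Gf μ lineKa (lineLamRange lam ((k : ℕ) + 1) ((K : ℤ) - 1))) := by
    have : Nonempty (Fin K) := ⟨⟨0, hK⟩⟩
    refine sum_pos (fun k _ => mul_pos (hμ k) ?_) univ_nonempty
    exact mul_pos (one_pos.trans_le (hone_le _ _)) (one_pos.trans_le (hone_le _ _))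
  have hsub_ne : (∑ k, μ k) - ∑ c, lam c ≠ 0 := by
    intro h
    rw [h, zero_mul] at hbal
    exact hsum_pos.ne hbal
  simp_rw [linePsiRange, ← mul_inv, div_inv_eq_mul]
  rw [← hbal, div_mul_cancel_left₀ hsub_ne]
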